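/- arXiv:1606.01204 — 9 statements merged into one kernel-verified Lean document; each statement's English description precedes it below -/
import Mathlib

section
/- If m is even, then χ(0) = 1, χ(1) = −2, χ(2) = 1, and χ(n) = χ(n−3) − χ(n−2) − χ(n−1) for every n ≥ 3. -/
/-- The defining properties of the cell-count function `C n d` of the Morse
complex `X_n^m` produced by the Comb Algorithm (with `C n 0` one less than the
number of `0`-cells). -/
def IsCombCount (m : ℕ) (C : ℤ → ℤ → ℤ) : Prop :=
  (∀ n d : ℤ, n < 0 → C n d = 0) ∧
  (∀ n d : ℤ, d < 0 → C n d = 0) ∧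
  (∀ n d : ℤ, 0 ≤ n → n ≤ 3 → 0 ≤ d →
    C n d =
      if n = 0 ∧ d = 0 then 1
      else if m = 2 then
        if n = 1 ∧ d = 1 then 2
        else if n = 2 ∧ d = 2 then 1
        else if n = 3 ∧ d = 2 then 2
        else 0
      else
        if n = 1 ∧ (d = 1 ∨ d = (m : ℤ) - 1) then 1
        else if n = 2 ∧ d = (m : ℤ) then 1
        else if n = 3 ∧ (d = 2 ∨ d = (m : ℤ)) then 1
        else 0) ∧
  (∀ n d : ℤ, 4 ≤ n →
    C n d = C (n - 3) (d - 2) + C (n - 4) (d - (m : ℤ) - 1) + C (n - 3) (d - (m : ℤ)))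

/-- The alternating sum `χ(n) = Σ_{d ≥ 0} (-1)^d C(n,d)` (a finite sum since
`C n d = 0` for all sufficiently large `d`). -/
noncomputable def chi (C : ℤ → ℤ → ℤ) (n : ℤ) : ℤ :=
  ∑ᶠ d : ℕ, (-1 : ℤ) ^ d * C n (d : ℤ)


section Aux

variable (m : ℕ) (C : ℤ → ℤ → ℤ)

/-- Support bound: `C n d = 0` for `d > n*m` (n a natural number). -/
lemma comb_bound (hm : 2 ≤ m) (hC : IsCombCount m C) :
    ∀ k : ℕ, ∀ d : ℤ, (k : ℤ) * m < d → C k d = 0 := by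
  obtain ⟨h0, hneg, hbase, hrec⟩ := hC
  intro k
  induction k using Nat.strong_induction_on with
  | _ k IH =>
    intro d hd
    rcases lt_or_ge k 4 with hk | hk
    · interval_cases k <;>
      · rw [hbase _ _ (by norm_num) (by norm_num)
          (by push_cast at hd ⊢; omega)]
        split_ifs <;> push_cast at hd ⊢ <;> omega
    · rw [hrec _ _ (by exact_mod_cast hk)]
      have e3 : (k : ℤ) - 3 = ((k - 3 : ℕ) : ℤ) := by omega
      have e4 : (k : ℤ) - 4 = ((k - 4 : ℕ) : ℤ) := by omega
      have hm' : (2 : ℤ) ≤ m := by exact_mod_cast hm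
      have b3 : ((k - 3 : ℕ) : ℤ) * m < d - 2 := by
        have : ((k - 3 : ℕ) : ℤ) = (k : ℤ) - 3 := by omega
        rw [this]; nlinarith
      have b4 : ((k - 4 : ℕ) : ℤ) * m < d - m - 1 := by
        have : ((k - 4 : ℕ) : ℤ) = (k : ℤ) - 4 := by omega
        rw [this]; nlinarith
      have b3' : ((k - 3 : ℕ) : ℤ) * m < d - m := by
        have : ((k - 3 : ℕ) : ℤ) = (k : ℤ) - 3 := by omega
        rw [this]; nlinarith
      rw [e3, e4, IH (k - 3) (by omega) _ b3, IH (k - 4) (by omega) _ b4,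
        IH (k - 3) (by omega) _ b3']
      ring

end Aux
section Aux2

variable {m : ℕ} {C : ℤ → ℤ → ℤ}

/-- `chi` as a finite sum. -/
lemma chi_eq_sum (hm : 2 ≤ m) (hC : IsCombCount m C) (k N : ℕ) (h : k * m < N) :
    chi C k = ∑ d ∈ Finset.range N, (-1 : ℤ) ^ d * C k d := by
  apply finsum_eq_sum_of_support_subset
  intro d hd
  simp only [Function.mem_support, ne_eq] at hd
  simp only [Finset.coe_range, Set.mem_Iio]
  by_contra hdN
  have hz : C k d = 0 := comb_bound m C hm hC k d (by push_cast; omega)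
  rw [hz, mul_zero] at hd
  exact hd rfl

lemma shift_sum (g : ℤ → ℤ) (hg : ∀ d : ℤ, d < 0 → g d = 0) (s : ℕ) :
    ∀ N : ℕ, ∑ d ∈ Finset.range (N + s), (-1 : ℤ) ^ d * g ((d : ℤ) - s) =
      (-1 : ℤ) ^ s * ∑ d ∈ Finset.range N, (-1 : ℤ) ^ d * g d := by
  induction s with
  | zero => intro N; simp
  | succ s ih =>
    intro N
    rw [show N + (s + 1) = (N + s) + 1 from rfl, Finset.sum_range_succ']
    have h0 : (-1 : ℤ) ^ 0 * g ((0 : ℕ) - (s + 1 : ℕ)) = 0 := by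
      rw [hg _ (by push_cast; omega)]; ring
    rw [h0, add_zero]
    have : ∀ d ∈ Finset.range (N + s),
        (-1 : ℤ) ^ (d + 1) * g ((d + 1 : ℕ) - (s + 1 : ℕ)) =
        (-1) * ((-1 : ℤ) ^ d * g ((d : ℕ) - (s : ℕ))) := by
      intro d _
      have : ((d + 1 : ℕ) : ℤ) - ((s + 1 : ℕ) : ℤ) = (d : ℤ) - s := by push_cast; ring
      rw [this, pow_succ]; ring
    rw [Finset.sum_congr rfl this, ← Finset.mul_sum, ih N, pow_succ]
    ring

lemma chi_shift (hm : 2 ≤ m) (hC : IsCombCount m C) (k s : ℕ) :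
    ∑ᶠ d : ℕ, (-1 : ℤ) ^ d * C k ((d : ℤ) - s) = (-1 : ℤ) ^ s * chi C k := by
  have hsub : (Function.support fun d : ℕ => (-1 : ℤ) ^ d * C k ((d : ℤ) - s)) ⊆
      ↑(Finset.range (k * m + 1 + s)) := by
    intro d hd
    simp only [Function.mem_support, ne_eq] at hd
    simp only [Finset.coe_range, Set.mem_Iio]
    by_contra hdN
    have hz : C k ((d : ℤ) - s) = 0 := comb_bound m C hm hC k _ (by push_cast; omega)
    rw [hz, mul_zero] at hd
    exact hd rfl
  rw [finsum_eq_sum_of_support_subset _ hsub,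
    shift_sum _ (fun d hd => hC.2.1 _ _ hd) s (k * m + 1),
    chi_eq_sum hm hC k (k * m + 1) (by omega)]

/-- Key recurrence: `χ(k+4) = 2 χ(k+1) − χ(k)` (for even `m`). -/
lemma chi_rec (hm : 2 ≤ m) (hme : Even m) (hC : IsCombCount m C) (k : ℕ) :
    chi C ((k : ℤ) + 4) = 2 * chi C ((k : ℤ) + 1) - chi C k := by
  obtain ⟨h0, hneg, hbase, hrec⟩ := hC
  have e1 : chi C ((k : ℤ) + 4) = ∑ᶠ d : ℕ,
      ((-1 : ℤ) ^ d * C ((k + 1 : ℕ)) ((d : ℤ) - ((2:ℕ):ℤ))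
        + (-1 : ℤ) ^ d * C k ((d : ℤ) - (m + 1 : ℕ))
        + (-1 : ℤ) ^ d * C ((k + 1 : ℕ)) ((d : ℤ) - (m : ℕ))) := by
    unfold chi
    apply finsum_congr
    intro d
    rw [hrec ((k : ℤ) + 4) d (by omega)]
    have e3 : (k : ℤ) + 4 - 3 = ((k + 1 : ℕ) : ℤ) := by push_cast; ring
    have e2 : (d : ℤ) - 2 = (d : ℤ) - ((2:ℕ):ℤ) := by norm_num
    have e4 : (k : ℤ) + 4 - 4 = (k : ℤ) := by ring
    have em1 : (d : ℤ) - m - 1 = (d : ℤ) - ((m + 1 : ℕ) : ℤ) := by push_cast; ring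
    rw [e3, e4, em1, e2]
    ring
  have hfin : ∀ (j s : ℕ), (Function.support fun d : ℕ =>
      (-1 : ℤ) ^ d * C j ((d : ℤ) - s)).Finite := by
    intro j s
    apply Set.Finite.subset (Finset.range (j * m + 1 + s)).finite_toSet
    intro d hd
    simp only [Function.mem_support, ne_eq] at hd
    simp only [Finset.coe_range, Set.mem_Iio]
    by_contra hdN
    rw [comb_bound m C hm ⟨h0, hneg, hbase, hrec⟩ j _ (by push_cast; omega), mul_zero] at hd
    exact hd rfl
  rw [e1, finsum_add_distrib (Set.Finite.subset ((hfin (k+1) 2).union (hfin k (m+1)))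
      (Function.support_add _ _)) (hfin (k+1) m),
    finsum_add_distrib (hfin (k+1) 2) (hfin k (m+1))]
  have hC' : IsCombCount m C := ⟨h0, hneg, hbase, hrec⟩
  have s1 := chi_shift hm hC' (k + 1) 2
  have s2 := chi_shift hm hC' k (m + 1)
  have s3 := chi_shift hm hC' (k + 1) m
  push_cast at s1 s2 s3 ⊢
  rw [s1, s2, s3, hme.neg_one_pow, Odd.neg_one_pow hme.add_one]
  ring

end Aux2
section Aux3

variable {m : ℕ} {C : ℤ → ℤ → ℤ}

lemma chi_vals (hm : 2 ≤ m) (hme : Even m) (hC : IsCombCount m C) :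
    chi C 0 = 1 ∧ chi C 1 = -2 ∧ chi C 2 = 1 ∧ chi C 3 = 2 := by
  obtain ⟨h0, hneg, hbase, hrec⟩ := hC
  have hsupp : ∀ (n : ℤ) (hn0 : 0 ≤ n) (hn3 : n ≤ 3) (S : Finset ℕ),
      (∀ d : ℕ, C n d ≠ 0 → d ∈ S) →
      chi C n = ∑ d ∈ S, (-1 : ℤ) ^ d * C n d := by
    intro n hn0 hn3 S hS
    apply finsum_eq_sum_of_support_subset
    intro d hd
    simp only [Function.mem_support, ne_eq] at hd
    exact hS d fun h => hd (by rw [h, mul_zero])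
  rcases eq_or_ne m 2 with hm2 | hm2
  · subst hm2
    have e0 : chi C 0 = ∑ d ∈ ({0} : Finset ℕ), (-1 : ℤ) ^ d * C 0 d := by
      apply hsupp 0 (by norm_num) (by norm_num)
      intro d hd
      rw [hbase 0 d (by norm_num) (by norm_num) (by omega)] at hd
      simp only [Finset.mem_singleton]
      split_ifs at hd <;> omega
    have e1 : chi C 1 = ∑ d ∈ ({1} : Finset ℕ), (-1 : ℤ) ^ d * C 1 d := by
      apply hsupp 1 (by norm_num) (by norm_num)
      intro d hd
      rw [hbase 1 d (by norm_num) (by norm_num) (by omega)] at hd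
      simp only [Finset.mem_singleton]
      split_ifs at hd <;> omega
    have e2 : chi C 2 = ∑ d ∈ ({2} : Finset ℕ), (-1 : ℤ) ^ d * C 2 d := by
      apply hsupp 2 (by norm_num) (by norm_num)
      intro d hd
      rw [hbase 2 d (by norm_num) (by norm_num) (by omega)] at hd
      simp only [Finset.mem_singleton]
      split_ifs at hd <;> omega
    have e3 : chi C 3 = ∑ d ∈ ({2} : Finset ℕ), (-1 : ℤ) ^ d * C 3 d := by
      apply hsupp 3 (by norm_num) (by norm_num)
      intro d hd
      rw [hbase 3 d (by norm_num) (by norm_num) (by omega)] at hd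
      simp only [Finset.mem_singleton]
      split_ifs at hd <;> omega
    have v0 : C 0 0 = 1 := by
      rw [hbase 0 0 (by norm_num) (by norm_num) (by norm_num)]; split_ifs <;> omega
    have v1 : C 1 1 = 2 := by
      rw [hbase 1 1 (by norm_num) (by norm_num) (by norm_num)]; split_ifs <;> omega
    have v2 : C 2 2 = 1 := by
      rw [hbase 2 2 (by norm_num) (by norm_num) (by norm_num)]; split_ifs <;> omega
    have v3 : C 3 2 = 2 := by
      rw [hbase 3 2 (by norm_num) (by norm_num) (by norm_num)]; split_ifs <;> omega
    rw [e0, e1, e2, e3]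
    simp only [Finset.sum_singleton, Nat.cast_ofNat, Nat.cast_one, Nat.cast_zero]
    rw [v0, v1, v2, v3]
    norm_num
  · have hm4 : 4 ≤ m := by
      rcases hme with ⟨r, hr⟩; omega
    have hcm1 : ((m - 1 : ℕ) : ℤ) = (m : ℤ) - 1 := by omega
    have hcm : ((m : ℕ) : ℤ) = (m : ℤ) := rfl
    have e0 : chi C 0 = ∑ d ∈ ({0} : Finset ℕ), (-1 : ℤ) ^ d * C 0 d := by
      apply hsupp 0 (by norm_num) (by norm_num)
      intro d hd
      rw [hbase 0 d (by norm_num) (by norm_num) (by omega)] at hd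
      simp only [Finset.mem_singleton]
      split_ifs at hd <;> omega
    have e1 : chi C 1 = ∑ d ∈ ({1, m - 1} : Finset ℕ), (-1 : ℤ) ^ d * C 1 d := by
      apply hsupp 1 (by norm_num) (by norm_num)
      intro d hd
      rw [hbase 1 d (by norm_num) (by norm_num) (by omega)] at hd
      simp only [Finset.mem_insert, Finset.mem_singleton]
      split_ifs at hd <;> omega
    have e2 : chi C 2 = ∑ d ∈ ({m} : Finset ℕ), (-1 : ℤ) ^ d * C 2 d := by
      apply hsupp 2 (by norm_num) (by norm_num)
      intro d hd
      rw [hbase 2 d (by norm_num) (by norm_num) (by omega)] at hd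
      simp only [Finset.mem_singleton]
      split_ifs at hd <;> omega
    have e3 : chi C 3 = ∑ d ∈ ({2, m} : Finset ℕ), (-1 : ℤ) ^ d * C 3 d := by
      apply hsupp 3 (by norm_num) (by norm_num)
      intro d hd
      rw [hbase 3 d (by norm_num) (by norm_num) (by omega)] at hd
      simp only [Finset.mem_insert, Finset.mem_singleton]
      split_ifs at hd <;> omega
    have v0 : C 0 0 = 1 := by
      rw [hbase 0 0 (by norm_num) (by norm_num) (by norm_num)]; split_ifs <;> omega
    have v11 : C 1 1 = 1 := by
      rw [hbase 1 1 (by norm_num) (by norm_num) (by norm_num)]; split_ifs <;> omega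
    have v1m : C 1 ((m : ℤ) - 1) = 1 := by
      rw [hbase 1 _ (by norm_num) (by norm_num) (by omega)]; split_ifs <;> omega
    have v2 : C 2 (m : ℤ) = 1 := by
      rw [hbase 2 _ (by norm_num) (by norm_num) (by omega)]; split_ifs <;> omega
    have v32 : C 3 2 = 1 := by
      rw [hbase 3 2 (by norm_num) (by norm_num) (by norm_num)]; split_ifs <;> omega
    have v3m : C 3 (m : ℤ) = 1 := by
      rw [hbase 3 _ (by norm_num) (by norm_num) (by omega)]; split_ifs <;> omega
    have hodd : Odd (m - 1) := Nat.Even.sub_odd (by omega) hme odd_one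
    have hne1 : (1 : ℕ) ≠ m - 1 := by omega
    have hne2 : (2 : ℕ) ≠ m := by omega
    rw [e0, e1, e2, e3, Finset.sum_pair hne1, Finset.sum_pair hne2]
    simp only [Finset.sum_singleton, Nat.cast_ofNat, Nat.cast_one, Nat.cast_zero, hcm1]
    rw [v0, v11, v1m, v2, v32, v3m, hodd.neg_one_pow, hme.neg_one_pow]
    norm_num

lemma chi_all (hm : 2 ≤ m) (hme : Even m) (hC : IsCombCount m C) :
    ∀ j : ℕ, chi C ((j : ℤ) + 3) = chi C j - chi C ((j : ℤ) + 1) - chi C ((j : ℤ) + 2) := by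
  obtain ⟨x0, x1, x2, x3⟩ := chi_vals hm hme hC
  intro j
  induction j using Nat.strong_induction_on with
  | _ j IH =>
    match j with
    | 0 =>
      norm_num
      rw [x0, x1, x2, x3]
      norm_num
    | (k + 1) =>
      have hrec := chi_rec hm hme hC k
      have ih := IH k (by omega)
      push_cast at hrec ih ⊢
      have h1 : (k : ℤ) + 1 + 3 = (k : ℤ) + 4 := by ring
      have h2 : (k : ℤ) + 1 + 2 = (k : ℤ) + 3 := by ring
      rw [h1, h2, hrec, ih]
      ring

end Aux3

theorem stmt_1 (m : ℕ) (hm : 2 ≤ m) (hme : Even m) (C : ℤ → ℤ → ℤ)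
    (hC : IsCombCount m C) :
    chi C 0 = 1 ∧ chi C 1 = -2 ∧ chi C 2 = 1 ∧
      ∀ n : ℤ, 3 ≤ n → chi C n = chi C (n - 3) - chi C (n - 2) - chi C (n - 1) := by
  obtain ⟨x0, x1, x2, x3⟩ := chi_vals hm hme hC
  refine ⟨x0, x1, x2, ?_⟩
  intro n hn
  obtain ⟨j, hj⟩ : ∃ j : ℕ, n = (j : ℤ) + 3 := ⟨(n - 3).toNat, by omega⟩
  subst hj
  have := chi_all hm hme hC j
  have a1 : (j : ℤ) + 3 - 3 = (j : ℤ) := by ring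
  have a2 : (j : ℤ) + 3 - 2 = (j : ℤ) + 1 := by ring
  have a3 : (j : ℤ) + 3 - 1 = (j : ℤ) + 2 := by ring
  rw [this, a1, a2, a3]
end

section
/- When m = 2: for all integers n ≥ 0 and d ≥ 0, C(n,d) = T(n−d+2, 3d−2n); and for all integers j ≥ 2 and k ≥ 0, T(j,k) = C(3(j−2)+k, 2(j−2)+k). -/
/-- The defining properties of the Riordan array `T` (OEIS A201780) of
`((1-x)²/(1-2x), x/(1-2x))`. -/
def IsRiordanT (T : ℤ → ℤ → ℤ) : Prop :=
  (∀ j k : ℤ, k < 0 → T j k = 0) ∧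
  (∀ j k : ℤ, j < k → T j k = 0) ∧
  T 0 0 = 1 ∧ T 1 0 = 0 ∧ T 2 0 = 1 ∧
  (∀ j k : ℤ, 0 ≤ k → k ≤ j →
    ¬((j = 0 ∧ k = 0) ∨ (j = 1 ∧ k = 0) ∨ (j = 2 ∧ k = 0)) →
    T j k = 2 * T (j - 1) k + T (j - 1) (k - 1))

theorem stmt_5 (C : ℤ → ℤ → ℤ) (hC : IsCombCount 2 C)
    (T : ℤ → ℤ → ℤ) (hT : IsRiordanT T) :
    (∀ n d : ℤ, 0 ≤ n → 0 ≤ d → C n d = T (n - d + 2) (3 * d - 2 * n)) ∧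
    (∀ j k : ℤ, 2 ≤ j → 0 ≤ k → T j k = C (3 * (j - 2) + k) (2 * (j - 2) + k)) := by
  obtain ⟨hCn, hCd, hCbase, hCrec⟩ := hC
  obtain ⟨hTk, hTjk, hT00, hT10, hT20, hTrec⟩ := hT
  -- small T values
  have t01 : T 0 1 = 0 := hTjk 0 1 (by norm_num)
  have t11 : T 1 1 = 1 := by
    rw [hTrec 1 1 (by norm_num) (by norm_num) (by norm_num)]
    norm_num [t01, hT00]
  have t21 : T 2 1 = 2 := by
    rw [hTrec 2 1 (by norm_num) (by norm_num) (by norm_num)]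
    norm_num [t11, hT10]
  have t12 : T 1 2 = 0 := hTjk 1 2 (by norm_num)
  have t22 : T 2 2 = 1 := by
    rw [hTrec 2 2 (by norm_num) (by norm_num) (by norm_num)]
    norm_num [t12, t11]
  have t30 : T 3 0 = 2 := by
    have h := hTrec 3 0 (by norm_num) (by norm_num) (by norm_num)
    norm_num at h
    rw [h, hTk 2 (-1) (by norm_num), hT20]
    ring
  have hsmall : ∀ n d : ℤ, 0 ≤ n → n ≤ 3 → 0 ≤ d →
      C n d = T (n - d + 2) (3 * d - 2 * n) := by
    intro n d hn hn3 hd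
    rw [hCbase n d hn hn3 hd]
    by_cases h00 : n = 0 ∧ d = 0
    · obtain ⟨rfl, rfl⟩ := h00
      norm_num [hT20]
    rw [if_neg h00, if_pos rfl]
    by_cases h11 : n = 1 ∧ d = 1
    · obtain ⟨rfl, rfl⟩ := h11
      norm_num [t21]
    rw [if_neg h11]
    by_cases h22 : n = 2 ∧ d = 2
    · obtain ⟨rfl, rfl⟩ := h22
      norm_num [t22]
    rw [if_neg h22]
    by_cases h32 : n = 3 ∧ d = 2
    · obtain ⟨rfl, rfl⟩ := h32
      norm_num [t30]
    rw [if_neg h32]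
    have hcase : 3 * d - 2 * n < 0 ∨ n - d + 2 < 3 * d - 2 * n := by omega
    rcases hcase with h | h
    · exact (hTk _ _ h).symm
    · exact (hTjk _ _ h).symm
  have key : ∀ N : ℕ, ∀ n d : ℤ, 0 ≤ n → n ≤ (N : ℤ) → 0 ≤ d →
      C n d = T (n - d + 2) (3 * d - 2 * n) := by
    intro N
    induction N with
    | zero => intro n d hn hN hd; exact hsmall n d hn (by omega) hd
    | succ N ih =>
      intro n d hn hN hd
      by_cases h3 : n ≤ 3
      · exact hsmall n d hn h3 hd
      have hn4 : 4 ≤ n := by omega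
      rw [hCrec n d hn4]
      have e1 : C (n - 3) (d - 2) = T (n - d + 1) (3 * d - 2 * n) := by
        by_cases hd2 : 2 ≤ d
        · have h := ih (n - 3) (d - 2) (by omega) (by push_cast at hN ⊢; omega) (by omega)
          rw [h]; congr 1 <;> ring
        · rw [hCd _ _ (by omega), hTk _ _ (by omega)]
      have e2 : C (n - 4) (d - (2 : ℕ) - 1) = T (n - d + 1) (3 * d - 2 * n - 1) := by
        push_cast
        by_cases hd3 : 3 ≤ d
        · have h := ih (n - 4) (d - 2 - 1) (by omega) (by push_cast at hN ⊢; omega) (by omega)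
          rw [h]; congr 1 <;> ring
        · rw [hCd _ _ (by omega), hTk _ _ (by omega)]
      have e3 : C (n - 3) (d - (2 : ℕ)) = T (n - d + 1) (3 * d - 2 * n) := by
        push_cast; exact e1
      rw [e1, e2, e3]
      by_cases hk : 3 * d - 2 * n < 0
      · rw [hTk (n - d + 1) _ hk, hTk (n - d + 1) _ (by omega), hTk (n - d + 2) _ hk]
        ring
      by_cases hjk : n - d + 2 < 3 * d - 2 * n
      · rw [hTjk (n - d + 1) (3 * d - 2 * n) (by omega),
          hTjk (n - d + 1) (3 * d - 2 * n - 1) (by omega),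
          hTjk (n - d + 2) (3 * d - 2 * n) hjk]
        ring
      have hr := hTrec (n - d + 2) (3 * d - 2 * n) (by omega) (by omega) (by omega)
      have harg1 : n - d + 2 - 1 = n - d + 1 := by ring
      rw [hr, harg1]
      ring
  constructor
  · intro n d hn hd
    exact key n.toNat n d hn (by omega) hd
  · intro j k hj hk
    have h := key (3 * (j - 2) + k).toNat (3 * (j - 2) + k) (2 * (j - 2) + k)
      (by omega) (by omega) (by omega)
    rw [h]; congr 1 <;> ring
end

section
/- For every n ≥ 0 and every d with 0 ≤ d < d_min(n), one has C(n,d) = 0, where d_min(n) = ⌊(2n+2)/3⌋ if n ≡ 0 or 1 (mod 3), and d_min(n) = 2·⌊(n−1)/3⌋ + m if n ≡ 2 (mod 3). (When m = 2 the two formulas coincide.) -/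
theorem stmt_6 (m : ℕ) (hm : 2 ≤ m) (C : ℤ → ℤ → ℤ) (hC : IsCombCount m C)
    (n d : ℤ) (hn : 0 ≤ n) (hd : 0 ≤ d)
    (hlt : d < if n % 3 = 2 then 2 * ((n - 1) / 3) + (m : ℤ) else (2 * n + 2) / 3) :
    C n d = 0 := by
  obtain ⟨h1, h2, h3, h4⟩ := hC
  lift n to ℕ using hn
  induction n using Nat.strong_induction_on generalizing d with
  | _ N IH =>
    rcases le_or_gt (N : ℤ) 3 with h | h
    · rw [h3 _ _ (by positivity) h hd]
      split at hlt <;> split_ifs <;> omega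
    · rw [h4 _ _ (by omega)]
      have e3 : ((N - 3 : ℕ) : ℤ) = (N : ℤ) - 3 := by omega
      have e4 : ((N - 4 : ℕ) : ℤ) = (N : ℤ) - 4 := by omega
      have t1 : C ((N : ℤ) - 3) (d - 2) = 0 := by
        rcases lt_or_ge (d - 2) 0 with h' | h'
        · exact h2 _ _ h'
        · have := IH (N - 3) (by omega) (d - 2) h'
            (by rw [e3]; split at hlt <;> split <;> omega)
          rwa [e3] at this
      have t2 : C ((N : ℤ) - 4) (d - (m : ℤ) - 1) = 0 := by
        rcases lt_or_ge (d - (m : ℤ) - 1) 0 with h' | h'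
        · exact h2 _ _ h'
        · have := IH (N - 4) (by omega) (d - (m : ℤ) - 1) h'
            (by rw [e4]; split at hlt <;> split <;> omega)
          rwa [e4] at this
      have t3 : C ((N : ℤ) - 3) (d - (m : ℤ)) = 0 := by
        rcases lt_or_ge (d - (m : ℤ)) 0 with h' | h'
        · exact h2 _ _ h'
        · have := IH (N - 3) (by omega) (d - (m : ℤ)) h'
            (by rw [e3]; split at hlt <;> split <;> omega)
          rwa [e3] at this
      rw [t1, t2, t3]; ring
end

section
/- For every n ≥ 0 and every d > d_max(n), one has C(n,d) = 0, where d_max(n) = ⌊(3n+2)/4⌋ if m = 2, and d_max(n) = n + 1 + (m−3)·⌊(n+2)/3⌋ if m ≥ 3. -/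
theorem stmt_7 (m : ℕ) (hm : 2 ≤ m) (C : ℤ → ℤ → ℤ) (hC : IsCombCount m C)
    (n d : ℤ) (hn : 0 ≤ n)
    (hgt : (if m = 2 then (3 * n + 2) / 4 else n + 1 + ((m : ℤ) - 3) * ((n + 2) / 3)) < d) :
    C n d = 0 := by
  obtain ⟨hneg, hdneg, hbase, hrec⟩ := hC
  have key : ∀ k : ℕ, ∀ n d : ℤ, n.toNat = k → 0 ≤ n →
      (if m = 2 then (3 * n + 2) / 4 else n + 1 + ((m : ℤ) - 3) * ((n + 2) / 3)) < d →
      C n d = 0 := by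
    intro k
    induction k using Nat.strong_induction_on with
    | _ k ih =>
      intro n d hk hn0 hgt
      by_cases hm2 : m = 2
      · rw [if_pos hm2] at hgt
        by_cases hle : n ≤ 3
        · rw [hbase n d hn0 hle (by omega)]
          split_ifs <;> omega
        · rw [hrec n d (by omega),
            ih (n-3).toNat (by omega) (n-3) (d-2) rfl (by omega)
              (by rw [if_pos hm2]; omega),
            ih (n-4).toNat (by omega) (n-4) (d-(m:ℤ)-1) rfl (by omega)
              (by rw [if_pos hm2]; omega),
            ih (n-3).toNat (by omega) (n-3) (d-(m:ℤ)) rfl (by omega)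
              (by rw [if_pos hm2]; omega)]
          norm_num
      · have hm3 : 3 ≤ m := by omega
        have hm3' : (3:ℤ) ≤ (m:ℤ) := by exact_mod_cast hm3
        have hm0 : (0:ℤ) ≤ (m:ℤ) - 3 := by omega
        rw [if_neg hm2] at hgt
        by_cases hle : n ≤ 3
        · interval_cases n <;>
            (norm_num at hgt;
             rw [hbase _ _ (by norm_num) (by norm_num) (by omega)];
             split_ifs <;> omega)
        · have hq : (n+2)/3 = (n-1)/3 + 1 := by omega
          have hq2 : (n-2)/3 + 1 ≤ (n+2)/3 := by omega
          have hmul1 : ((m:ℤ)-3) * ((n+2)/3) = ((m:ℤ)-3)*((n-1)/3) + ((m:ℤ)-3) := by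
            rw [hq, mul_add, mul_one]
          have hmul2 : ((m:ℤ)-3) * ((n-2)/3) + ((m:ℤ)-3) ≤ ((m:ℤ)-3)*((n+2)/3) := by
            have h := mul_le_mul_of_nonneg_left hq2 hm0
            rw [mul_add, mul_one] at h
            linarith
          rw [hrec n d (by omega),
            ih (n-3).toNat (by omega) (n-3) (d-2) rfl (by omega)
              (by rw [if_neg hm2]
                  have e : (n-3+2:ℤ)/3 = (n-1)/3 := by omega
                  rw [e]; linarith),
            ih (n-4).toNat (by omega) (n-4) (d-(m:ℤ)-1) rfl (by omega)
              (by rw [if_neg hm2]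
                  have e : (n-4+2:ℤ)/3 = (n-2)/3 := by omega
                  rw [e]; linarith),
            ih (n-3).toNat (by omega) (n-3) (d-(m:ℤ)) rfl (by omega)
              (by rw [if_neg hm2]
                  have e : (n-3+2:ℤ)/3 = (n-1)/3 := by omega
                  rw [e]; linarith)]
          norm_num
  exact key n.toNat n d rfl hn hgt
end

section
/- If m ≥ 4, then for every integer k ≥ 0: C(3k, 2k) = 1 and C(3k, 2k+1) = 0. (Consequently the Morse complex X_{3k}^m has a single cell in its minimal dimension 2k and no cells in dimension 2k+1, so its integral homology in dimension 2k is ℤ.) -/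
/-- `C n d = 0` whenever `3 d < 2 n` (below the minimal dimension). -/
lemma comb_zero_of_lt (m : ℕ) (hm : 4 ≤ m) (C : ℤ → ℤ → ℤ) (hC : IsCombCount m C) :
    ∀ N : ℕ, ∀ n d : ℤ, n ≤ N → 3 * d < 2 * n → C n d = 0 := by
  have hm' : (4 : ℤ) ≤ (m : ℤ) := by exact_mod_cast hm
  intro N
  induction N using Nat.strong_induction_on with
  | _ N ih =>
    intro n d hn hd
    rcases lt_or_ge n 0 with h | h0
    · exact hC.1 n d h
    rcases lt_or_ge d 0 with h | hd0
    · exact hC.2.1 n d h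
    rcases le_or_gt n 3 with h3 | h4
    · rw [hC.2.2.1 n d h0 h3 hd0]
      split_ifs <;> omega
    · have hN : 1 ≤ N := by omega
      rw [hC.2.2.2 n d (by omega)]
      rw [ih (N - 1) (by omega) (n - 3) (d - 2) (by omega) (by omega),
        ih (N - 1) (by omega) (n - 4) (d - (m : ℤ) - 1) (by omega) (by omega),
        ih (N - 1) (by omega) (n - 3) (d - (m : ℤ)) (by omega) (by omega)]
      ring

theorem stmt_8 (m : ℕ) (hm : 4 ≤ m) (C : ℤ → ℤ → ℤ) (hC : IsCombCount m C) (k : ℕ) :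
    C (3 * k) (2 * k) = 1 ∧ C (3 * k) (2 * k + 1) = 0 := by
  have hm' : (4 : ℤ) ≤ (m : ℤ) := by exact_mod_cast hm
  induction k using Nat.strong_induction_on with
  | _ k ih =>
    match k with
    | 0 =>
      constructor
      · rw [hC.2.2.1 _ _ (by norm_num) (by norm_num) (by norm_num)]
        split_ifs <;> omega
      · rw [hC.2.2.1 _ _ (by norm_num) (by norm_num) (by norm_num)]
        split_ifs <;> omega
    | 1 =>
      constructor
      · rw [hC.2.2.1 _ _ (by norm_num) (by norm_num) (by norm_num)]
        split_ifs <;> omega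
      · rw [hC.2.2.1 _ _ (by norm_num) (by norm_num) (by norm_num)]
        split_ifs <;> omega
    | (j + 2) =>
      obtain ⟨ih1, ih2⟩ := ih (j + 1) (by omega)
      have hz := comb_zero_of_lt m hm C hC
      have e1 : (3 : ℤ) * ((j : ℤ) + 2) - 3 = 3 * ((j + 1 : ℕ) : ℤ) := by push_cast; ring
      have e2 : (2 : ℤ) * ((j : ℤ) + 2) - 2 = 2 * ((j + 1 : ℕ) : ℤ) := by push_cast; ring
      have e3 : (2 : ℤ) * ((j : ℤ) + 2) + 1 - 2 = 2 * ((j + 1 : ℕ) : ℤ) + 1 := by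
        push_cast; ring
      push_cast
      constructor
      · rw [hC.2.2.2 (3 * ((j : ℤ) + 2)) (2 * ((j : ℤ) + 2)) (by omega)]
        rw [e1, e2, ih1,
          hz (3 * j + 2) (3 * ((j : ℤ) + 2) - 4) (2 * ((j : ℤ) + 2) - (m : ℤ) - 1)
            (by push_cast; omega) (by omega),
          hz (3 * j + 3) (3 * ((j + 1 : ℕ) : ℤ)) (2 * ((j : ℤ) + 2) - (m : ℤ))
            (by push_cast; omega) (by omega)]
        ring
      · rw [hC.2.2.2 (3 * ((j : ℤ) + 2)) (2 * ((j : ℤ) + 2) + 1) (by omega)]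
        rw [e1, e3, ih2,
          hz (3 * j + 2) (3 * ((j : ℤ) + 2) - 4) (2 * ((j : ℤ) + 2) + 1 - (m : ℤ) - 1)
            (by push_cast; omega) (by omega),
          hz (3 * j + 3) (3 * ((j + 1 : ℕ) : ℤ)) (2 * ((j : ℤ) + 2) + 1 - (m : ℤ))
            (by push_cast; omega) (by omega)]
        ring
end

section
/- If m ≥ 4, then for every integer k ≥ 0: C(3k+1, 2k+1) = 1 and C(3k+1, 2k+2) = 0. (Consequently the Morse complex X_{3k+1}^m has a single cell in its minimal dimension 2k+1 and no cells in dimension 2k+2, so its integral homology in dimension 2k+1 is ℤ.) -/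
lemma combCount_vanish_nat (m : ℕ) (hm : 4 ≤ m) (C : ℤ → ℤ → ℤ) (hC : IsCombCount m C) :
    ∀ n : ℕ, ∀ d : ℤ, 3 * d < 2 * (n : ℤ) → C n d = 0 := by
  obtain ⟨h1, h2, h3, h4⟩ := hC
  intro n
  induction n using Nat.strong_induction_on with
  | _ n ih =>
    intro d hd
    rcases lt_or_ge d 0 with hd0 | hd0
    · exact h2 _ _ hd0
    rcases le_or_gt (n : ℤ) 3 with hn3 | hn3
    · rw [h3 n d (by positivity) hn3 hd0]
      split_ifs <;> omega
    · have hn4 : 4 ≤ (n : ℤ) := by omega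
      rw [h4 n d hn4]
      have e3 : (n : ℤ) - 3 = ((n - 3 : ℕ) : ℤ) := by push_cast; omega
      have e4 : (n : ℤ) - 4 = ((n - 4 : ℕ) : ℤ) := by push_cast; omega
      rw [e3, e4,
        ih (n - 3) (by omega) (d - 2) (by push_cast; omega),
        ih (n - 4) (by omega) (d - (m : ℤ) - 1) (by push_cast; omega),
        ih (n - 3) (by omega) (d - (m : ℤ)) (by push_cast; omega)]
      ring

lemma combCount_vanish (m : ℕ) (hm : 4 ≤ m) (C : ℤ → ℤ → ℤ) (hC : IsCombCount m C) :
    ∀ n d : ℤ, 3 * d < 2 * n → C n d = 0 := by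
  intro n d hd
  rcases lt_or_ge n 0 with hn | hn
  · exact hC.1 _ _ hn
  · have : n = ((n.toNat : ℕ) : ℤ) := by omega
    rw [this]
    exact combCount_vanish_nat m hm C hC n.toNat d (by omega)

theorem stmt_9 (m : ℕ) (hm : 4 ≤ m) (C : ℤ → ℤ → ℤ) (hC : IsCombCount m C) (k : ℕ) :
    C (3 * k + 1) (2 * k + 1) = 1 ∧ C (3 * k + 1) (2 * k + 2) = 0 := by
  obtain ⟨h1, h2, h3, h4⟩ := hC
  have hv := combCount_vanish m hm C ⟨h1, h2, h3, h4⟩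
  induction k with
  | zero =>
    norm_num
    constructor
    · rw [h3 1 1 (by norm_num) (by norm_num) (by norm_num)]
      split_ifs <;> omega
    · rw [h3 1 2 (by norm_num) (by norm_num) (by norm_num)]
      split_ifs <;> omega
  | succ k ih =>
    obtain ⟨ih1, ih2⟩ := ih
    have hcast : ((k + 1 : ℕ) : ℤ) = (k : ℤ) + 1 := by push_cast; ring
    rw [hcast]
    have hn4 : (4 : ℤ) ≤ 3 * ((k : ℤ) + 1) + 1 := by omega
    constructor
    · rw [h4 _ _ hn4]
      have e1 : 3 * ((k : ℤ) + 1) + 1 - 3 = 3 * k + 1 := by ring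
      have e2 : 2 * ((k : ℤ) + 1) + 1 - 2 = 2 * k + 1 := by ring
      have e3 : 3 * ((k : ℤ) + 1) + 1 - 4 = 3 * k := by ring
      rw [e1, e2, e3, ih1,
        hv (3 * k) (2 * ((k : ℤ) + 1) + 1 - (m : ℤ) - 1) (by omega),
        hv (3 * (k : ℤ) + 1) (2 * ((k : ℤ) + 1) + 1 - (m : ℤ)) (by omega)]
      norm_num
    · rw [h4 _ _ hn4]
      have e1 : 3 * ((k : ℤ) + 1) + 1 - 3 = 3 * k + 1 := by ring
      have e2 : 2 * ((k : ℤ) + 1) + 2 - 2 = 2 * k + 2 := by ring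
      have e3 : 3 * ((k : ℤ) + 1) + 1 - 4 = 3 * k := by ring
      rw [e1, e2, e3, ih2,
        hv (3 * k) (2 * ((k : ℤ) + 1) + 2 - (m : ℤ) - 1) (by omega),
        hv (3 * (k : ℤ) + 1) (2 * ((k : ℤ) + 1) + 2 - (m : ℤ)) (by omega)]
      norm_num
end

section
/- If m ≥ 4, then for every integer k ≥ 0, C(3k+2, d) = 0 for all d with 0 ≤ d ≤ 2k+2; in particular C(3k+2, ⌊(2(3k+2)+2)/3⌋) = C(3k+2, 2k+2) = 0. (Consequently the integral homology of the Morse complex X_{3k+2}^m in dimension ⌊(2n+2)/3⌋, n = 3k+2, is trivial.) -/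
/-- Lower bound (minus one) for the least dimension of a nonzero cell count. -/
def Bnd (n : ℕ) : ℤ :=
  2 * (↑(n / 3) : ℤ) + (if n % 3 = 0 then -1 else if n % 3 = 1 then 0 else 3)

lemma Bnd_sub3 (n : ℕ) (hn : 4 ≤ n) : Bnd (n - 3) = Bnd n - 2 := by
  unfold Bnd; split_ifs <;> omega

lemma Bnd_sub4 (n : ℕ) (hn : 4 ≤ n) : Bnd n - 5 ≤ Bnd (n - 4) := by
  unfold Bnd; split_ifs <;> omega

lemma key (m : ℕ) (hm : 4 ≤ m) (C : ℤ → ℤ → ℤ) (hC : IsCombCount m C) :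
    ∀ n : ℕ, ∀ d : ℤ, d ≤ Bnd n → C n d = 0 := by
  obtain ⟨hneg, hdneg, hbase, hrec⟩ := hC
  intro n
  induction n using Nat.strong_induction_on with
  | _ n ih =>
    intro d hd
    rcases lt_or_ge d 0 with hd0 | hd0
    · exact hdneg _ _ hd0
    rcases le_or_gt n 3 with hn3 | hn3
    · rw [hbase n d (by positivity) (by exact_mod_cast hn3) hd0]
      interval_cases n <;> simp only [Bnd] at hd <;> norm_num at hd ⊢ <;>
        first | (split_ifs <;> omega) | omega
    · have hn4 : 4 ≤ n := hn3
      have h1 : ((n : ℤ) - 3) = ((n - 3 : ℕ) : ℤ) := by omega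
      have h2 : ((n : ℤ) - 4) = ((n - 4 : ℕ) : ℤ) := by omega
      rw [hrec n d (by exact_mod_cast hn4), h1, h2,
        ih (n - 3) (by omega) (d - 2) (by rw [Bnd_sub3 n hn4]; omega),
        ih (n - 4) (by omega) (d - m - 1)
          (by have := Bnd_sub4 n hn4; omega),
        ih (n - 3) (by omega) (d - m) (by rw [Bnd_sub3 n hn4]; omega)]
      ring

theorem stmt_10 (m : ℕ) (hm : 4 ≤ m) (C : ℤ → ℤ → ℤ) (hC : IsCombCount m C) (k : ℕ) :
    (∀ d : ℤ, 0 ≤ d → d ≤ 2 * (k : ℤ) + 2 → C (3 * k + 2) d = 0) ∧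
    C (3 * k + 2) ((2 * (3 * (k : ℤ) + 2) + 2) / 3) = 0 := by
  have hcast : (3 * (k : ℤ) + 2) = ((3 * k + 2 : ℕ) : ℤ) := by push_cast; ring
  have hB : Bnd (3 * k + 2) = 2 * (k : ℤ) + 3 := by
    unfold Bnd; split_ifs <;> omega
  constructor
  · intro d _ hd2
    rw [hcast]
    exact key m hm C hC _ d (by omega)
  · have hdiv : (2 * (3 * (k : ℤ) + 2) + 2) / 3 = 2 * k + 2 := by omega
    rw [hdiv, hcast]
    exact key m hm C hC _ _ (by omega)
end

section
/- For integers m ≥ 1 and n ≥ 1, the alternating sum over independent sets I(Y_n^m) := Σ_{S independent in Y_n^m} (−1)^{|S|} equals: 0 if n = 3k; (−1)^{mk+1} if n = 3k+1; and (−1)^{m(k+1)} if n = 3k+2. (This is the negative of the reduced Euler characteristic of the independence complex Ind(Y_n^m), which is contractible for n = 3k, homotopy equivalent to S^{mk} for n = 3k+1, and to S^{m(k+1)−1} for n = 3k+2.) -/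
attribute [local instance] Classical.propDecidable

/-- The alternating sum `Σ_S (-1)^{|S|}` over all independent sets `S` of
vertices of `G` (including the empty set). -/
noncomputable def indepSum {V : Type} [Fintype V] (G : SimpleGraph V) : ℤ :=
  ∑ S ∈ Finset.univ.filter
      (fun S : Finset V => ∀ x ∈ S, ∀ y ∈ S, ¬ G.Adj x y),
    (-1 : ℤ) ^ S.card

/-- Base relation for the extended star `Y_n^m`: a central vertex `none`
joined to `m` disjoint paths with `n` edges; `some (j, k)` is the `(k+1)`-st
vertex on the `j`-th tendril. -/
def yRel (m n : ℕ) : Option (Fin m × Fin n) → Option (Fin m × Fin n) → Prop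
  | none, some (_, k) => (k : ℕ) = 0
  | some (j, k), some (j', k') => j = j' ∧ (k' : ℕ) = (k : ℕ) + 1
  | _, _ => False

/-- The extended star graph `Y_n^m`. -/
def yGraph (m n : ℕ) : SimpleGraph (Option (Fin m × Fin n)) :=
  SimpleGraph.fromRel (yRel m n)

noncomputable section AuxStar

open Finset

private def wgt {α : Type} [Fintype α] (f : α → Bool) : ℤ :=
  ∏ x, (if f x then (-1 : ℤ) else 1)

private lemma wgt_decide {V : Type} [Fintype V] [DecidableEq V] (S : Finset V) :
    wgt (fun x => decide (x ∈ S)) = (-1 : ℤ) ^ S.card := by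
  unfold wgt
  calc (∏ x, if decide (x ∈ S) = true then (-1 : ℤ) else 1)
      = ∏ x, (if x ∈ S then (-1 : ℤ) else 1) := by
        refine Finset.prod_congr rfl fun x _ => ?_
        simp
    _ = ∏ _x ∈ S, (-1 : ℤ) := Fintype.prod_ite_mem S _
    _ = (-1 : ℤ) ^ S.card := Finset.prod_const _

private lemma indepSum_eq_sum_fun {V : Type} [Fintype V] [DecidableEq V] (G : SimpleGraph V) :
    indepSum G = ∑ f : V → Bool,
      if (∀ x y, f x = true → f y = true → ¬ G.Adj x y) then wgt f else 0 := by
  unfold indepSum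
  rw [Finset.sum_filter]
  refine Fintype.sum_equiv ⟨fun S => fun x => decide (x ∈ S),
    fun f => Finset.univ.filter (fun x => f x = true), ?_, ?_⟩ _ _ fun S => ?_
  · intro S
    ext x
    simp
  · intro f
    funext x
    simp
  · simp only [Equiv.coe_fn_mk]
    have hc : (∀ x ∈ S, ∀ y ∈ S, ¬ G.Adj x y)
        ↔ (∀ x y, decide (x ∈ S) = true → decide (y ∈ S) = true → ¬ G.Adj x y) := by
      constructor
      · intro h x y hx hy
        exact h x (by simpa using hx) y (by simpa using hy)
      · intro h x hx y hy
        exact h x y (by simpa using hx) (by simpa using hy)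
    simp only [hc]
    rw [wgt_decide]

private def pIndep {n : ℕ} (f : Fin n → Bool) : Prop :=
  ∀ i j : Fin n, f i = true → f j = true → (j : ℕ) ≠ (i : ℕ) + 1

private def pA (n : ℕ) : ℤ := ∑ f : Fin n → Bool, if pIndep f then wgt f else 0

private def pB (n : ℕ) : ℤ :=
  ∑ f : Fin n → Bool,
    if pIndep f ∧ ∀ i, f i = true → (i : ℕ) ≠ 0 then wgt f else 0

/-- split a boolean function on the star's vertices into center value and tendrils. -/
private def starEquiv (m n : ℕ) :
    (Bool × (Fin m → Fin n → Bool)) ≃ (Option (Fin m × Fin n) → Bool) where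
  toFun p := fun v => Option.elim v p.1 (fun q => p.2 q.1 q.2)
  invFun f := (f none, fun j k => f (some (j, k)))
  left_inv p := rfl
  right_inv f := by
    funext v
    cases v with
    | none => rfl
    | some q => rfl

private lemma wgt_star (m n : ℕ) (b : Bool) (g : Fin m → Fin n → Bool) :
    wgt (starEquiv m n (b, g))
      = (if b then (-1 : ℤ) else 1) * ∏ j, wgt (g j) := by
  unfold wgt starEquiv
  rw [Fintype.prod_option]
  congr 1
  rw [Fintype.prod_prod_type]
  exact Finset.prod_congr rfl fun j _ => Finset.prod_congr rfl fun i _ => rfl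

private lemma yIndep_iff (m n : ℕ) (b : Bool) (g : Fin m → Fin n → Bool) :
    (∀ x y, (starEquiv m n (b, g)) x = true → (starEquiv m n (b, g)) y = true →
        ¬ (yGraph m n).Adj x y)
      ↔ ((∀ j, pIndep (g j)) ∧
          (b = true → ∀ j i, g j i = true → (i : ℕ) ≠ 0)) := by
  constructor
  · intro h
    constructor
    · intro j i i' hi hi' heq
      refine h (some (j, i)) (some (j, i')) hi hi' ?_
      rw [yGraph, SimpleGraph.fromRel_adj]
      refine ⟨?_, Or.inl ⟨rfl, heq⟩⟩
      intro hcon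
      rw [Option.some_inj, Prod.mk.injEq] at hcon
      have := hcon.2
      omega
    · intro hb j i hi hi0
      refine h none (some (j, i)) hb hi ?_
      rw [yGraph, SimpleGraph.fromRel_adj]
      exact ⟨by simp, Or.inl hi0⟩
  · rintro ⟨h1, h2⟩ x y hx hy hadj
    rw [yGraph, SimpleGraph.fromRel_adj] at hadj
    obtain ⟨hne, hrel | hrel⟩ := hadj
    · match x, y, hrel with
      | none, some (j, k), hrel => exact h2 hx j k hy hrel
      | some (j, k), some (j', k'), ⟨hj, hk⟩ =>
        subst hj
        exact h1 j k k' hx hy hk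
    · match x, y, hrel with
      | some (j, k), none, hrel => exact h2 hy j k hx hrel
      | some (j', k'), some (j, k), ⟨hj, hk⟩ =>
        subst hj
        exact h1 j k k' hy hx hk

private lemma sum_pi_ite {m : ℕ} {κ : Type} [Fintype κ] (P : κ → Prop) (F : κ → ℤ) :
    (∑ g : Fin m → κ, if (∀ j, P (g j)) then ∏ j, F (g j) else 0)
      = (∑ x : κ, if P x then F x else 0) ^ m := by
  have h1 : ∀ g : Fin m → κ,
      (if (∀ j, P (g j)) then ∏ j, F (g j) else 0)
        = ∏ j, if P (g j) then F (g j) else 0 := by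
    intro g
    by_cases h : ∀ j, P (g j)
    · rw [if_pos h]
      exact Finset.prod_congr rfl fun j _ => (if_pos (h j)).symm
    · rw [if_neg h]
      push_neg at h
      obtain ⟨j, hj⟩ := h
      exact (Finset.prod_eq_zero (f := fun j => if P (g j) then F (g j) else 0)
        (Finset.mem_univ j) (by simp [hj])).symm
  rw [Finset.sum_congr rfl fun g _ => h1 g]
  calc (∑ g : Fin m → κ, ∏ j, if P (g j) then F (g j) else 0)
      = ∑ g ∈ Fintype.piFinset (fun _ : Fin m => (univ : Finset κ)),
          ∏ j, if P (g j) then F (g j) else 0 := by rw [Fintype.piFinset_univ]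
    _ = ∏ _j : Fin m, ∑ x : κ, (if P x then F x else 0) :=
        (Finset.prod_univ_sum (fun _ : Fin m => (univ : Finset κ))
          (fun _ x => if P x then F x else 0)).symm
    _ = (∑ x : κ, if P x then F x else 0) ^ m := by
        rw [Finset.prod_const, Finset.card_univ, Fintype.card_fin]

private def Qc (b : Bool) {n : ℕ} (h : Fin n → Bool) : Prop :=
  pIndep h ∧ (b = true → ∀ i, h i = true → (i : ℕ) ≠ 0)

private lemma qsum_true (n : ℕ) :
    (∑ x : Fin n → Bool, if Qc true x then wgt x else 0) = pB n := by
  unfold pB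
  refine Finset.sum_congr rfl fun x _ => ?_
  refine if_congr ?_ rfl rfl
  unfold Qc
  constructor
  · rintro ⟨h1, h2⟩
    exact ⟨h1, h2 rfl⟩
  · rintro ⟨h1, h2⟩
    exact ⟨h1, fun _ => h2⟩

private lemma qsum_false (n : ℕ) :
    (∑ x : Fin n → Bool, if Qc false x then wgt x else 0) = pA n := by
  unfold pA
  refine Finset.sum_congr rfl fun x _ => ?_
  refine if_congr ?_ rfl rfl
  unfold Qc
  constructor
  · rintro ⟨h1, -⟩
    exact h1
  · intro h1
    exact ⟨h1, fun h => by simp at h⟩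

set_option maxHeartbeats 1000000 in
private lemma indepSum_yGraph (m n : ℕ) :
    indepSum (yGraph m n) = pA n ^ m - pB n ^ m := by
  calc indepSum (yGraph m n)
      = ∑ f : Option (Fin m × Fin n) → Bool,
          (if (∀ x y, f x = true → f y = true → ¬ (yGraph m n).Adj x y)
            then wgt f else 0) := indepSum_eq_sum_fun _
    _ = ∑ p : Bool × (Fin m → Fin n → Bool),
          (if (∀ x y, (starEquiv m n p) x = true → (starEquiv m n p) y = true →
              ¬ (yGraph m n).Adj x y)
            then wgt (starEquiv m n p) else 0) :=
        (Fintype.sum_equiv (starEquiv m n)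
          (fun p => if (∀ x y, (starEquiv m n p) x = true → (starEquiv m n p) y = true →
              ¬ (yGraph m n).Adj x y) then wgt (starEquiv m n p) else 0)
          (fun f => if (∀ x y, f x = true → f y = true → ¬ (yGraph m n).Adj x y)
            then wgt f else 0) fun p => rfl).symm
    _ = ∑ p : Bool × (Fin m → Fin n → Bool),
          (if p.1 then (-1 : ℤ) else 1) *
            (if (∀ j, Qc p.1 (p.2 j)) then ∏ j, wgt (p.2 j) else 0) := by
        refine Finset.sum_congr rfl fun p _ => ?_
        obtain ⟨b, g⟩ := p
        rw [if_congr (yIndep_iff m n b g) rfl rfl, wgt_star]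
        have hiff : ((∀ j, pIndep (g j)) ∧ (b = true → ∀ j i, g j i = true → (i : ℕ) ≠ 0))
            ↔ ∀ j, Qc b (g j) := by
          constructor
          · rintro ⟨h1, h2⟩ j
            exact ⟨h1 j, fun hb i => h2 hb j i⟩
          · intro h
            exact ⟨fun j => (h j).1, fun hb j => (h j).2 hb⟩
        rw [if_congr hiff rfl rfl, mul_ite, mul_zero]
    _ = ∑ b : Bool, ∑ g : Fin m → Fin n → Bool,
          (if b then (-1 : ℤ) else 1) *
            (if (∀ j, Qc b (g j)) then ∏ j, wgt (g j) else 0) :=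
        Fintype.sum_prod_type (fun p : Bool × (Fin m → Fin n → Bool) =>
          (if p.1 then (-1 : ℤ) else 1) *
            (if (∀ j, Qc p.1 (p.2 j)) then ∏ j, wgt (p.2 j) else 0))
    _ = ∑ b : Bool, (if b then (-1 : ℤ) else 1) *
          (∑ x : Fin n → Bool, if Qc b x then wgt x else 0) ^ m := by
        refine Finset.sum_congr rfl fun b _ => ?_
        rw [← Finset.mul_sum, sum_pi_ite (Qc b) wgt]
    _ = pA n ^ m - pB n ^ m := by
        rw [Fintype.sum_bool, qsum_true, qsum_false]
        simp
        ring

private lemma wgt_cons {n : ℕ} (x : Bool) (f : Fin n → Bool) :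
    wgt (Fin.cons x f) = (if x then (-1 : ℤ) else 1) * wgt f := by
  unfold wgt
  rw [Fin.prod_univ_succ]
  simp

private lemma pIndep_cons {n : ℕ} (x : Bool) (f : Fin n → Bool) :
    pIndep (Fin.cons x f) ↔
      pIndep f ∧ (x = true → ∀ i, f i = true → (i : ℕ) ≠ 0) := by
  constructor
  · intro h
    refine ⟨fun i j hi hj => ?_, fun hx i hi => ?_⟩
    · have := h i.succ j.succ (by simpa using hi) (by simpa using hj)
      simp only [Fin.val_succ] at this
      omega
    · have := h 0 i.succ (by simpa using hx) (by simpa using hi)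
      simp only [Fin.val_succ, Fin.val_zero] at this
      omega
  · rintro ⟨h1, h2⟩ i j hi hj heq
    induction j using Fin.cases with
    | zero => simp at heq
    | succ j' =>
      induction i using Fin.cases with
      | zero =>
        simp only [Fin.cons_zero] at hi
        simp only [Fin.cons_succ] at hj
        simp only [Fin.val_succ, Fin.val_zero] at heq
        exact h2 hi j' hj (by omega)
      | succ i' =>
        simp only [Fin.cons_succ] at hi hj
        simp only [Fin.val_succ] at heq
        exact h1 i' j' hi hj (by omega)

private lemma sum_cons {n : ℕ} (F : (Fin (n + 1) → Bool) → ℤ) :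
    (∑ f : Fin (n + 1) → Bool, F f)
      = ∑ x : Bool, ∑ f : Fin n → Bool, F (Fin.cons x f) := by
  calc (∑ f : Fin (n + 1) → Bool, F f)
      = ∑ p : Bool × (Fin n → Bool), F (Fin.cons p.1 p.2) :=
        (Fintype.sum_equiv (Fin.consEquiv fun _ => Bool)
          (fun p => F (Fin.cons p.1 p.2)) F (fun p => rfl)).symm
    _ = ∑ x : Bool, ∑ f : Fin n → Bool, F (Fin.cons x f) := Fintype.sum_prod_type _

private lemma pB_succ (n : ℕ) : pB (n + 1) = pA n := by
  unfold pA pB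
  rw [sum_cons, Fintype.sum_bool]
  have h1 : (∑ f : Fin n → Bool,
      if pIndep (Fin.cons true f) ∧
          ∀ i, (Fin.cons true f : Fin (n+1) → Bool) i = true → (i : ℕ) ≠ 0 then
        wgt (Fin.cons true f) else 0) = 0 := by
    refine Finset.sum_eq_zero fun f _ => ?_
    rw [if_neg]
    rintro ⟨-, h⟩
    exact h 0 (by simp) (by simp)
  have h2 : ∀ f : Fin n → Bool,
      (if pIndep (Fin.cons false f) ∧
          ∀ i, (Fin.cons false f : Fin (n+1) → Bool) i = true → (i : ℕ) ≠ 0 then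
        wgt (Fin.cons false f) else 0) = if pIndep f then wgt f else 0 := by
    intro f
    have hc : (pIndep (Fin.cons false f) ∧
        ∀ i, (Fin.cons false f : Fin (n+1) → Bool) i = true → (i : ℕ) ≠ 0) ↔ pIndep f := by
      rw [pIndep_cons]
      constructor
      · rintro ⟨⟨hp, -⟩, -⟩; exact hp
      · intro hp
        refine ⟨⟨hp, by simp⟩, fun i hi => ?_⟩
        induction i using Fin.cases with
        | zero => simp at hi
        | succ i' => simp
    rw [if_congr hc rfl rfl, wgt_cons]
    simp
  rw [h1, Finset.sum_congr rfl fun f _ => h2 f]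
  ring

private lemma pA_succ (n : ℕ) : pA (n + 1) = pA n - pB n := by
  unfold pA pB
  rw [sum_cons, Fintype.sum_bool]
  have h1 : ∀ f : Fin n → Bool,
      (if pIndep (Fin.cons true f) then wgt (Fin.cons true f) else 0)
        = -(if pIndep f ∧ ∀ i, f i = true → (i : ℕ) ≠ 0 then wgt f else 0) := by
    intro f
    rw [pIndep_cons, wgt_cons]
    simp only [if_true, neg_one_mul, forall_true_left]
    split <;> simp
  have h2 : ∀ f : Fin n → Bool,
      (if pIndep (Fin.cons false f) then wgt (Fin.cons false f) else 0)
        = if pIndep f then wgt f else 0 := by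
    intro f
    rw [pIndep_cons, wgt_cons]
    simp
  rw [Finset.sum_congr rfl fun f _ => h1 f, Finset.sum_congr rfl fun f _ => h2 f,
    Finset.sum_neg_distrib]
  ring

private lemma pA_zero : pA 0 = 1 := by
  unfold pA
  rw [Fintype.sum_eq_single (fun _ => false) (fun f hf => absurd (funext fun i => i.elim0) hf)]
  rw [if_pos (show pIndep (fun _ => false) from fun i => i.elim0)]
  unfold wgt
  simp

private lemma pB_zero : pB 0 = 1 := by
  unfold pB
  rw [Fintype.sum_eq_single (fun _ => false) (fun f hf => absurd (funext fun i => i.elim0) hf)]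
  rw [if_pos (show pIndep (fun _ => false) ∧ ∀ i : Fin 0, (fun _ => false) i = true → (i:ℕ) ≠ 0 from ⟨fun i => i.elim0, fun i => i.elim0⟩)]
  unfold wgt
  simp

private lemma pA_recur (n : ℕ) : pA (n + 2) = pA (n + 1) - pA n := by
  rw [pA_succ, pB_succ]

private lemma pA_val (k : ℕ) :
    pA (3 * k) = (-1) ^ k ∧ pA (3 * k + 1) = 0 ∧ pA (3 * k + 2) = (-1) ^ (k + 1) := by
  induction k with
  | zero =>
    refine ⟨by simpa using pA_zero, ?_, ?_⟩
    · have := pA_succ 0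
      rw [pA_zero, pB_zero] at this
      simpa using this
    · have := pA_recur 0
      have h1 : pA 1 = 0 := by
        have := pA_succ 0; rw [pA_zero, pB_zero] at this; simpa using this
      rw [h1, pA_zero] at this
      simpa using this
  | succ k ih =>
    obtain ⟨h0, h1, h2⟩ := ih
    have e0 : 3 * (k + 1) = (3 * k + 1) + 2 := by ring
    have e1 : 3 * (k + 1) + 1 = (3 * k + 2) + 2 := by ring
    have e2 : 3 * (k + 1) + 2 = (3 * (k + 1)) + 2 := by ring
    have g0 : pA (3 * (k + 1)) = (-1) ^ (k + 1) := by
      rw [e0, pA_recur, h2, h1]; ring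
    have g1 : pA (3 * (k + 1) + 1) = 0 := by
      rw [e1, pA_recur]
      rw [show 3 * k + 2 + 1 = 3 * (k+1) from by ring, g0, h2]
      ring
    refine ⟨g0, g1, ?_⟩
    rw [e2, pA_recur, g1, g0]
    ring


theorem stmt_11 (m n : ℕ) (hm : 1 ≤ m) (hn : 1 ≤ n) :
    (∀ k : ℕ, n = 3 * k → indepSum (yGraph m n) = 0) ∧
    (∀ k : ℕ, n = 3 * k + 1 → indepSum (yGraph m n) = (-1 : ℤ) ^ (m * k + 1)) ∧
    (∀ k : ℕ, n = 3 * k + 2 → indepSum (yGraph m n) = (-1 : ℤ) ^ (m * (k + 1))) := by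
  refine ⟨?_, ?_, ?_⟩
  · rintro k rfl
    obtain ⟨k, rfl⟩ : ∃ k', k = k' + 1 := ⟨k - 1, by omega⟩
    rw [indepSum_yGraph]
    have hA : pA (3 * (k + 1)) = (-1) ^ (k + 1) := (pA_val (k + 1)).1
    have hB : pB (3 * (k + 1)) = (-1) ^ (k + 1) := by
      rw [show 3 * (k + 1) = (3 * k + 2) + 1 from by ring, pB_succ]
      exact (pA_val k).2.2
    rw [hA, hB]
    ring
  · rintro k rfl
    rw [indepSum_yGraph]
    have hA : pA (3 * k + 1) = 0 := (pA_val k).2.1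
    have hB : pB (3 * k + 1) = (-1) ^ k := by
      rw [pB_succ]
      exact (pA_val k).1
    rw [hA, hB, zero_pow (by omega : m ≠ 0), ← pow_mul, pow_succ, mul_comm k m]
    ring
  · rintro k rfl
    rw [indepSum_yGraph]
    have hA : pA (3 * k + 2) = (-1) ^ (k + 1) := (pA_val k).2.2
    have hB : pB (3 * k + 2) = 0 := by
      rw [show 3 * k + 2 = (3 * k + 1) + 1 from by ring, pB_succ]
      exact (pA_val k).2.1
    rw [hA, hB, zero_pow (by omega : m ≠ 0), ← pow_mul, mul_comm (k + 1) m]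
    ring

end AuxStar
end

section
/- For integers m ≥ 2 and n ≥ 1, the alternating sum over independent sets I(Ŷ_n^m) := Σ_{S independent in Ŷ_n^m} (−1)^{|S|} equals: (−1)^{mk+1} if n = 3k or n = 3k+1; and (−1)^{mk} + (−1)^{m(k+1)} if n = 3k+2. (This is the negative of the reduced Euler characteristic of the independence complex Ind(Ŷ_n^m), which is homotopy equivalent to S^{mk} for n = 3k and n = 3k+1, and to S^{mk+1} ∨ S^{m(k+1)−1} for n = 3k+2.) -/
attribute [local instance] Classical.propDecidable

/-- Base relation for `Ŷ_n^m`: vertices `Sum.inl 0 = a` and `Sum.inl 1 = b`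
joined by `m` internally disjoint paths, each with `n + 1` edges;
`Sum.inr (j, k)` is the `(k+1)`-st internal vertex on the `j`-th path. -/
def yhatRel (m n : ℕ) : (Fin 2 ⊕ Fin m × Fin n) → (Fin 2 ⊕ Fin m × Fin n) → Prop
  | Sum.inl i, Sum.inr (_, k) => (i = 0 ∧ (k : ℕ) = 0) ∨ (i = 1 ∧ (k : ℕ) = n - 1)
  | Sum.inr (j, k), Sum.inr (j', k') => j = j' ∧ (k' : ℕ) = (k : ℕ) + 1
  | _, _ => False

/-- The graph `Ŷ_n^m`: two vertices joined by `m` internally disjoint paths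
each having `n + 1` edges. -/
def yhatGraph (m n : ℕ) : SimpleGraph (Fin 2 ⊕ Fin m × Fin n) :=
  SimpleGraph.fromRel (yhatRel m n)

lemma ite_iff {α : Type*} {P Q : Prop} {dP : Decidable P} {dQ : Decidable Q} (h : P ↔ Q) (x y : α) :
    (@ite α P dP x y) = @ite α Q dQ x y := by
  by_cases hP : P
  · rw [if_pos hP, if_pos (h.mp hP)]
  · rw [if_neg hP, if_neg (fun hQ => hP (h.mpr hQ))]

def pcond (T : Finset ℕ) : Prop := ∀ k ∈ T, k + 1 ∉ T

noncomputable def pE (n : ℕ) (A B : Prop) : ℤ :=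
  ∑ T ∈ (Finset.range n).powerset,
    if pcond T ∧ (A → 0 ∉ T) ∧ (B → n - 1 ∉ T) then (-1 : ℤ) ^ T.card else 0

lemma sum_powerset_restrict (n : ℕ) (F : Finset ℕ → ℤ) (hF : ∀ T, n ∈ T → F T = 0) :
    ∑ T ∈ (Finset.range (n+1)).powerset, F T = ∑ T ∈ (Finset.range n).powerset, F T := by
  rw [Finset.range_add_one, Finset.sum_powerset_insert (by simp)]
  have : ∀ T ∈ (Finset.range n).powerset, F (insert n T) = 0 := by
    intro T _; exact hF _ (Finset.mem_insert_self _ _)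
  rw [Finset.sum_congr rfl this]
  simp

lemma pE_succ_true (n : ℕ) (A : Prop) : pE (n+1) A True = pE n A False := by
  unfold pE
  rw [sum_powerset_restrict]
  · apply Finset.sum_congr rfl
    intro T hT
    have hnT : n ∉ T := fun h => by
      have := Finset.mem_powerset.1 hT h; simp at this
    have : (pcond T ∧ (A → 0 ∉ T) ∧ (True → n + 1 - 1 ∉ T))
        ↔ (pcond T ∧ (A → 0 ∉ T) ∧ (False → n - 1 ∉ T)) := by
      simp [hnT]
    exact ite_iff this _ _
  · intro T hT
    rw [if_neg]
    simp only [not_and]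
    intro _ _ h
    exact absurd hT (h trivial)

lemma pE_rec (n : ℕ) (A : Prop) :
    pE (n+2) A False = pE (n+1) A False - pE (n+1) A True := by
  unfold pE
  simp only [false_implies, and_true, true_implies, Nat.add_sub_cancel]
  rw [show (n:ℕ)+2 = (n+1)+1 from rfl, Finset.range_add_one,
    Finset.sum_powerset_insert (by simp)]
  have hBC : (∑ T ∈ (Finset.range (n+1)).powerset,
        if pcond (insert (n+1) T) ∧ (A → 0 ∉ insert (n+1) T)
          then (-1:ℤ)^(insert (n+1) T).card else 0)
      = ∑ T ∈ (Finset.range (n+1)).powerset,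
        -(if pcond T ∧ (A → 0 ∉ T) ∧ n ∉ T then (-1:ℤ)^T.card else 0) := by
    apply Finset.sum_congr rfl
    intro T hT
    have hT' := Finset.mem_powerset.1 hT
    have hn1 : n + 1 ∉ T := fun h => by have := hT' h; simp at this
    have hn2 : n + 2 ∉ T := fun h => by have := hT' h; simp at this
    have hcard : (insert (n+1) T).card = T.card + 1 := Finset.card_insert_of_notMem hn1
    have hcond : (pcond (insert (n+1) T) ∧ (A → 0 ∉ insert (n+1) T))
        ↔ (pcond T ∧ (A → 0 ∉ T) ∧ n ∉ T) := by
      constructor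
      · rintro ⟨hp, hA⟩
        refine ⟨fun k hk h => hp k (Finset.mem_insert_of_mem hk) (Finset.mem_insert_of_mem h),
          fun hA' h0 => hA hA' (Finset.mem_insert_of_mem h0),
          fun hmem => hp n (Finset.mem_insert_of_mem hmem) (Finset.mem_insert_self _ _)⟩
      · rintro ⟨hp, hA, hB⟩
        refine ⟨?_, fun hA' h => ?_⟩
        · intro k hk h
          rcases Finset.mem_insert.1 hk with rfl | hk'
          · rcases Finset.mem_insert.1 h with h' | h'
            · omega
            · exact hn2 h'
          · rcases Finset.mem_insert.1 h with h' | h'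
            · have : k = n := by omega
              subst this; exact hB hk'
            · exact hp k hk' h'
        · rcases Finset.mem_insert.1 h with h' | h'
          · omega
          · exact hA hA' h'
    rw [hcard, ite_iff hcond]
    · split <;> ring
    · exact Classical.propDecidable _
  rw [hBC, Finset.sum_neg_distrib]
  ring

lemma pE_rec' (n : ℕ) (A : Prop) :
    pE (n+2) A False = pE (n+1) A False - pE n A False := by
  rw [pE_rec, pE_succ_true]

lemma pE_zero (A B : Prop) : pE 0 A B = 1 := by
  unfold pE
  simp [pcond]

lemma pE_one (A B : Prop) : pE 1 A B = if A ∨ B then 1 else 0 := by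
  unfold pE
  rw [Finset.range_one, show ({0} : Finset ℕ).powerset = {∅, {0}} from by decide,
    Finset.sum_pair (by decide : (∅ : Finset ℕ) ≠ {0})]
  have h1 : pcond (∅ : Finset ℕ) := by simp [pcond]
  have h2 : pcond ({0} : Finset ℕ) := by simp [pcond]
  by_cases hA : A <;> by_cases hB : B <;> simp [h1, h2, hA, hB]

lemma pE_one_ff : pE 1 False False = 0 := by rw [pE_one]; simp

lemma pE_one_tf : pE 1 True False = 1 := by rw [pE_one]; simp

lemma pE_vals (k : ℕ) :
    (pE (3*k) False False = (-1)^k ∧ pE (3*k+1) False False = 0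
      ∧ pE (3*k+2) False False = -(-1)^k)
    ∧ (pE (3*k) True False = (-1)^k ∧ pE (3*k+1) True False = (-1)^k
      ∧ pE (3*k+2) True False = 0) := by
  induction k with
  | zero =>
    have hff2 : pE 2 False False = -1 := by
      rw [show (2:ℕ) = 0 + 2 from rfl, pE_rec', pE_one_ff, pE_zero]; ring
    have htf2 : pE 2 True False = 0 := by
      rw [show (2:ℕ) = 0 + 2 from rfl, pE_rec', pE_one_tf, pE_zero]; ring
    simp [pE_zero, pE_one_ff, pE_one_tf, hff2, htf2]
  | succ k ih =>
    obtain ⟨⟨f0, f1, f2⟩, ⟨t0, t1, t2⟩⟩ := ih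
    have e0 : 3*(k+1) = (3*k+1)+2 := by ring
    have e1 : 3*(k+1)+1 = (3*k+2)+2 := by ring
    have e2 : 3*(k+1)+2 = (3*(k+1))+2 := by ring
    have f3 : pE (3*(k+1)) False False = (-1)^(k+1) := by
      rw [e0, pE_rec', show 3*k+1+1 = 3*k+2 from rfl, f2, f1]; ring
    have t3 : pE (3*(k+1)) True False = (-1)^(k+1) := by
      rw [e0, pE_rec', show 3*k+1+1 = 3*k+2 from rfl, t2, t1]; ring
    have f4 : pE (3*(k+1)+1) False False = 0 := by
      rw [e1, pE_rec', show 3*k+2+1 = 3*(k+1) from by ring, f3, f2]; ring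
    have t4 : pE (3*(k+1)+1) True False = (-1)^(k+1) := by
      rw [e1, pE_rec', show 3*k+2+1 = 3*(k+1) from by ring, t3, t2]; ring
    have f5 : pE (3*(k+1)+2) False False = -(-1)^(k+1) := by
      rw [e2, pE_rec', show 3*(k+1)+1 = 3*(k+1)+1 from rfl, f4, f3]; ring
    have t5 : pE (3*(k+1)+2) True False = 0 := by
      rw [e2, pE_rec', t4, t3]; ring
    exact ⟨⟨f3, f4, f5⟩, ⟨t3, t4, t5⟩⟩

lemma pE_congr (n : ℕ) {A A' B B' : Prop} (hA : A ↔ A') (hB : B ↔ B') :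
    pE n A B = pE n A' B' := by
  unfold pE
  refine Finset.sum_congr rfl fun T _ => ?_
  exact ite_iff (by rw [hA, hB]) _ _

lemma yhat_adj_inl_inl (m n : ℕ) (i i' : Fin 2) :
    ¬ (yhatGraph m n).Adj (.inl i) (.inl i') := by
  unfold yhatGraph
  rw [SimpleGraph.fromRel_adj]
  rintro ⟨-, h | h⟩ <;> exact h

lemma yhat_adj_inl_inr (m n : ℕ) (i : Fin 2) (j : Fin m) (k : Fin n) :
    (yhatGraph m n).Adj (.inl i) (.inr (j, k))
      ↔ ((i = 0 ∧ (k : ℕ) = 0) ∨ (i = 1 ∧ (k : ℕ) = n - 1)) := by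
  unfold yhatGraph
  rw [SimpleGraph.fromRel_adj]
  constructor
  · rintro ⟨-, h | h⟩
    · exact h
    · exact h.elim
  · intro h
    exact ⟨by simp, Or.inl h⟩

lemma yhat_adj_inr_inr (m n : ℕ) (j j' : Fin m) (k k' : Fin n) :
    (yhatGraph m n).Adj (.inr (j, k)) (.inr (j', k'))
      ↔ (j = j' ∧ ((k' : ℕ) = (k : ℕ) + 1 ∨ (k : ℕ) = (k' : ℕ) + 1)) := by
  unfold yhatGraph
  rw [SimpleGraph.fromRel_adj]
  constructor
  · rintro ⟨-, ⟨hj, hk⟩ | ⟨hj, hk⟩⟩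
    · exact ⟨hj, Or.inl hk⟩
    · exact ⟨hj.symm, Or.inr hk⟩
  · rintro ⟨rfl, hk | hk⟩
    · refine ⟨fun h => ?_, Or.inl ⟨rfl, hk⟩⟩
      simp only [Sum.inr.injEq, Prod.mk.injEq] at h
      rw [h.2] at hk; omega
    · refine ⟨fun h => ?_, Or.inr ⟨rfl, hk⟩⟩
      simp only [Sum.inr.injEq, Prod.mk.injEq] at h
      rw [h.2] at hk; omega

/-- weight of a subset of one path, as a subset of `Fin n` -/
noncomputable def pathW (n : ℕ) (A B : Prop) (T : Finset (Fin n)) : ℤ :=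
  if (∀ k ∈ T, ∀ k' ∈ T, (k' : ℕ) ≠ (k : ℕ) + 1) ∧ (A → ∀ k ∈ T, (k : ℕ) ≠ 0)
      ∧ (B → ∀ k ∈ T, (k : ℕ) ≠ n - 1)
    then (-1 : ℤ) ^ T.card else 0

lemma sum_pathW (n : ℕ) (A B : Prop) :
    ∑ T : Finset (Fin n), pathW n A B T = pE n A B := by
  unfold pE
  refine Finset.sum_nbij' (i := fun T => T.map ⟨Fin.val, Fin.val_injective⟩)
    (j := fun T' => Finset.univ.filter (fun k : Fin n => (k : ℕ) ∈ T')) ?_ ?_ ?_ ?_ ?_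
  · intro T _
    simp only [Finset.mem_powerset, Finset.subset_iff, Finset.mem_map, Finset.mem_range]
    rintro a ⟨k, -, rfl⟩
    exact k.2
  · intro T' _
    exact Finset.mem_univ _
  · intro T _
    ext k
    simp only [Finset.mem_filter, Finset.mem_univ, true_and, Finset.mem_map,
      Function.Embedding.coeFn_mk]
    exact ⟨fun ⟨a, ha, h⟩ => by rwa [show a = k from Fin.val_injective h] at ha,
      fun h => ⟨k, h, rfl⟩⟩
  · intro T' hT'
    have h := Finset.mem_powerset.1 hT'
    ext a
    simp only [Finset.mem_map, Finset.mem_filter, Finset.mem_univ, true_and,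
      Function.Embedding.coeFn_mk]
    constructor
    · rintro ⟨k, hk, rfl⟩; exact hk
    · intro ha
      exact ⟨⟨a, Finset.mem_range.1 (h ha)⟩, ha, rfl⟩
  · intro T _
    unfold pathW
    rw [Finset.card_map]
    refine ite_iff ?_ _ _
    have hmem : ∀ a : ℕ, a ∈ T.map ⟨Fin.val, Fin.val_injective⟩ ↔ ∃ k ∈ T, (k : ℕ) = a := by
      intro a; simp
    constructor
    · rintro ⟨h1, h2, h3⟩
      refine ⟨?_, fun hA h0 => ?_, fun hB hcontra => ?_⟩
      · intro a ha hcontra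
        rw [hmem] at ha hcontra
        obtain ⟨k, hk, rfl⟩ := ha
        obtain ⟨k', hk', hkk'⟩ := hcontra
        exact h1 k hk k' hk' hkk'
      · rw [hmem] at h0
        obtain ⟨k, hk, hk0⟩ := h0
        exact h2 hA k hk hk0
      · rw [hmem] at hcontra
        obtain ⟨k, hk, hkn⟩ := hcontra
        exact h3 hB k hk hkn
    · rintro ⟨h1, h2, h3⟩
      refine ⟨fun k hk k' hk' hkk' => ?_, fun hA k hk hk0 => ?_, fun hB k hk hkn => ?_⟩
      · exact h1 (k : ℕ) ((hmem _).2 ⟨k, hk, rfl⟩) ((hmem _).2 ⟨k', hk', hkk'⟩)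
      · exact h2 hA (by rw [hmem]; exact ⟨k, hk, hk0⟩)
      · exact h3 hB (by rw [hmem]; exact ⟨k, hk, hkn⟩)

section Pack

variable {m n : ℕ}

/-- packing a pair (subset of {a,b}, family of path subsets) into a vertex subset -/
noncomputable def pack (m n : ℕ) (p : Finset (Fin 2) × (Fin m → Finset (Fin n))) :
    Finset (Fin 2 ⊕ Fin m × Fin n) :=
  Finset.univ.filter (fun v => Sum.rec (fun i => i ∈ p.1) (fun q => q.2 ∈ p.2 q.1) v)

@[simp] lemma mem_pack_inl (p : Finset (Fin 2) × (Fin m → Finset (Fin n))) (i : Fin 2) :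
    (Sum.inl i ∈ pack m n p) ↔ i ∈ p.1 := by
  simp [pack]

@[simp] lemma mem_pack_inr (p : Finset (Fin 2) × (Fin m → Finset (Fin n))) (j : Fin m)
    (k : Fin n) : (Sum.inr (j, k) ∈ pack m n p) ↔ k ∈ p.2 j := by
  simp [pack]

noncomputable def packEquiv (m n : ℕ) :
    (Finset (Fin 2) × (Fin m → Finset (Fin n))) ≃ Finset (Fin 2 ⊕ Fin m × Fin n) where
  toFun := pack m n
  invFun S := (Finset.univ.filter (fun i => Sum.inl i ∈ S),
    fun j => Finset.univ.filter (fun k => Sum.inr (j, k) ∈ S))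
  left_inv p := by
    ext <;> simp
  right_inv S := by
    ext v
    rcases v with i | ⟨j, k⟩ <;> simp

lemma card_pack (p : Finset (Fin 2) × (Fin m → Finset (Fin n))) :
    (pack m n p).card = p.1.card + ∑ j, (p.2 j).card := by
  rw [pack, Finset.card_filter, Fintype.sum_sum_type]
  congr 1
  · have h1 : (∑ i : Fin 2, if i ∈ p.1 then (1 : ℕ) else 0) = p.1.card := by
      rw [Finset.sum_ite_mem, Finset.univ_inter]
      exact (Finset.card_eq_sum_ones _).symm
    exact Eq.trans (Finset.sum_congr rfl fun i _ => ite_iff Iff.rfl 1 0) h1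
  · rw [Fintype.sum_prod_type]
    refine Finset.sum_congr rfl fun j _ => ?_
    have h1 : (∑ k : Fin n, if k ∈ p.2 j then (1 : ℕ) else 0) = (p.2 j).card := by
      rw [Finset.sum_ite_mem, Finset.univ_inter]
      exact (Finset.card_eq_sum_ones _).symm
    exact Eq.trans (Finset.sum_congr rfl fun k _ => ite_iff Iff.rfl 1 0) h1

/-- the independence condition, in packed form -/
def famC (m n : ℕ) (p : Finset (Fin 2) × (Fin m → Finset (Fin n))) : Prop :=
  ∀ j, (∀ k ∈ p.2 j, ∀ k' ∈ p.2 j, (k' : ℕ) ≠ (k : ℕ) + 1)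
    ∧ ((0 : Fin 2) ∈ p.1 → ∀ k ∈ p.2 j, (k : ℕ) ≠ 0)
    ∧ ((1 : Fin 2) ∈ p.1 → ∀ k ∈ p.2 j, (k : ℕ) ≠ n - 1)

lemma indep_pack_iff (p : Finset (Fin 2) × (Fin m → Finset (Fin n))) :
    (∀ x ∈ pack m n p, ∀ y ∈ pack m n p, ¬ (yhatGraph m n).Adj x y) ↔ famC m n p := by
  unfold famC
  constructor
  · intro h j
    refine ⟨fun k hk k' hk' hkk' => ?_, fun h0 k hk hk0 => ?_, fun h1 k hk hkn => ?_⟩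
    · exact h _ ((mem_pack_inr p j k).2 hk) _ ((mem_pack_inr p j k').2 hk')
        ((yhat_adj_inr_inr m n j j k k').2 ⟨rfl, Or.inl hkk'⟩)
    · exact h _ ((mem_pack_inl p 0).2 h0) _ ((mem_pack_inr p j k).2 hk)
        ((yhat_adj_inl_inr m n 0 j k).2 (Or.inl ⟨rfl, hk0⟩))
    · exact h _ ((mem_pack_inl p 1).2 h1) _ ((mem_pack_inr p j k).2 hk)
        ((yhat_adj_inl_inr m n 1 j k).2 (Or.inr ⟨rfl, hkn⟩))
  · intro h x hx y hy hadj
    rcases x with i | ⟨j, k⟩ <;> rcases y with i' | ⟨j', k'⟩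
    · exact yhat_adj_inl_inl m n i i' hadj
    · rw [mem_pack_inl] at hx
      rw [mem_pack_inr] at hy
      rcases (yhat_adj_inl_inr m n i j' k').1 hadj with ⟨rfl, hk0⟩ | ⟨rfl, hkn⟩
      · exact (h j').2.1 hx k' hy hk0
      · exact (h j').2.2 hx k' hy hkn
    · rw [mem_pack_inr] at hx
      rw [mem_pack_inl] at hy
      rcases (yhat_adj_inl_inr m n i' j k).1 hadj.symm with ⟨rfl, hk0⟩ | ⟨rfl, hkn⟩
      · exact (h j).2.1 hy k hx hk0
      · exact (h j).2.2 hy k hx hkn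
    · rw [mem_pack_inr] at hx hy
      obtain ⟨rfl, hor⟩ := (yhat_adj_inr_inr m n j j' k k').1 hadj
      rcases hor with hkk' | hkk'
      · exact (h j).1 k hx k' hy hkk'
      · exact (h j).1 k' hy k hx hkk'

lemma sum_prod_pathW (n : ℕ) (A B : Prop) (m : ℕ) :
    ∑ x : Fin m → Finset (Fin n), ∏ j, pathW n A B (x j) = (pE n A B) ^ m := by
  rw [← Fintype.piFinset_univ, Finset.sum_prod_piFinset]
  rw [Finset.prod_congr rfl fun j _ => sum_pathW n A B]
  rw [Finset.prod_const, Finset.card_univ, Fintype.card_fin]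

lemma indepSum_yhat (m n : ℕ) :
    indepSum (yhatGraph m n)
      = ∑ t : Finset (Fin 2), (-1 : ℤ) ^ t.card
          * (pE n ((0 : Fin 2) ∈ t) ((1 : Fin 2) ∈ t)) ^ m := by
  have key : indepSum (yhatGraph m n)
      = ∑ p ∈ Finset.univ.filter (famC m n),
          (-1 : ℤ) ^ (p.1.card + ∑ j, (p.2 j).card) := by
    rw [indepSum]
    refine Finset.sum_equiv (packEquiv m n).symm (fun S => ?_) (fun S hS => ?_)
    · simp only [Finset.mem_filter, Finset.mem_univ, true_and]
      have hps : pack m n ((packEquiv m n).symm S) = S := (packEquiv m n).apply_symm_apply S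
      have h := indep_pack_iff (m := m) (n := n) ((packEquiv m n).symm S)
      rw [hps] at h
      exact h
    · have hps : pack m n ((packEquiv m n).symm S) = S := (packEquiv m n).apply_symm_apply S
      have h := card_pack (m := m) (n := n) ((packEquiv m n).symm S)
      rw [hps] at h
      rw [h]
  rw [key, Finset.sum_filter]
  have hterm : ∀ p : Finset (Fin 2) × (Fin m → Finset (Fin n)),
      (if famC m n p then (-1 : ℤ) ^ (p.1.card + ∑ j, (p.2 j).card) else 0)
      = (-1 : ℤ) ^ p.1.card
          * ∏ j, pathW n ((0 : Fin 2) ∈ p.1) ((1 : Fin 2) ∈ p.1) (p.2 j) := by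
    intro p
    by_cases hC : famC m n p
    · rw [if_pos hC, pow_add, ← Finset.prod_pow_eq_pow_sum]
      congr 1
      refine Finset.prod_congr rfl fun j _ => ?_
      rw [pathW, if_pos (hC j)]
    · rw [if_neg hC]
      have : ∃ j0, ¬ ((∀ k ∈ p.2 j0, ∀ k' ∈ p.2 j0, (k' : ℕ) ≠ (k : ℕ) + 1)
          ∧ ((0 : Fin 2) ∈ p.1 → ∀ k ∈ p.2 j0, (k : ℕ) ≠ 0)
          ∧ ((1 : Fin 2) ∈ p.1 → ∀ k ∈ p.2 j0, (k : ℕ) ≠ n - 1)) := by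
        by_contra hcon
        push_neg at hcon
        exact hC hcon
      obtain ⟨j0, hj0⟩ := this
      rw [Finset.prod_eq_zero (Finset.mem_univ j0) (by rw [pathW, if_neg hj0]), mul_zero]
  refine Eq.trans (Finset.sum_congr rfl fun p _ => hterm p) ?_
  rw [Fintype.sum_prod_type]
  refine Finset.sum_congr rfl fun t _ => ?_
  show (∑ y : Fin m → Finset (Fin n),
      (-1 : ℤ) ^ t.card * ∏ j, pathW n ((0 : Fin 2) ∈ t) ((1 : Fin 2) ∈ t) (y j)) = _
  rw [← Finset.mul_sum]
  congr 1
  exact sum_prod_pathW n _ _ m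

end Pack

lemma indepSum_closed (m n : ℕ) :
    indepSum (yhatGraph m n) = pE n False False ^ m - pE n True False ^ m
      - pE n False True ^ m + pE n True True ^ m := by
  rw [indepSum_yhat]
  rw [show (Finset.univ : Finset (Finset (Fin 2)))
      = {∅, {0}, {1}, {0, 1}} from by decide]
  rw [Finset.sum_insert (by decide), Finset.sum_insert (by decide),
    Finset.sum_insert (by decide), Finset.sum_singleton]
  have e1 : pE n ((0 : Fin 2) ∈ (∅ : Finset (Fin 2))) ((1 : Fin 2) ∈ (∅ : Finset (Fin 2)))
      = pE n False False := pE_congr n (by simp) (by simp)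
  have e2 : pE n ((0 : Fin 2) ∈ ({0} : Finset (Fin 2))) ((1 : Fin 2) ∈ ({0} : Finset (Fin 2)))
      = pE n True False := pE_congr n (by simp) (by simp)
  have e3 : pE n ((0 : Fin 2) ∈ ({1} : Finset (Fin 2))) ((1 : Fin 2) ∈ ({1} : Finset (Fin 2)))
      = pE n False True := pE_congr n (by simp) (by simp)
  have e4 : pE n ((0 : Fin 2) ∈ ({0, 1} : Finset (Fin 2))) ((1 : Fin 2) ∈ ({0, 1} : Finset (Fin 2)))
      = pE n True True := pE_congr n (by simp) (by simp)
  rw [e1, e2, e3, e4]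
  have c0 : (∅ : Finset (Fin 2)).card = 0 := rfl
  have c1 : ({0} : Finset (Fin 2)).card = 1 := rfl
  have c2 : ({1} : Finset (Fin 2)).card = 1 := rfl
  have c3 : ({0, 1} : Finset (Fin 2)).card = 2 := by decide
  rw [c0, c1, c2, c3]
  ring

theorem stmt_12 (m n : ℕ) (hm : 2 ≤ m) (hn : 1 ≤ n) :
    (∀ k : ℕ, n = 3 * k → indepSum (yhatGraph m n) = (-1 : ℤ) ^ (m * k + 1)) ∧
    (∀ k : ℕ, n = 3 * k + 1 → indepSum (yhatGraph m n) = (-1 : ℤ) ^ (m * k + 1)) ∧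
    (∀ k : ℕ, n = 3 * k + 2 →
      indepSum (yhatGraph m n) = (-1 : ℤ) ^ (m * k) + (-1 : ℤ) ^ (m * (k + 1))) := by
  have hm0 : m ≠ 0 := by omega
  refine ⟨fun k hk => ?_, fun k hk => ?_, fun k hk => ?_⟩
  · subst hk
    rcases k with - | k'
    · omega
    · rw [indepSum_closed]
      rw [(pE_vals (k'+1)).1.1, (pE_vals (k'+1)).2.1]
      rw [show 3*(k'+1) = (3*k'+2)+1 from by ring]
      rw [pE_succ_true, pE_succ_true]
      rw [(pE_vals k').1.2.2, (pE_vals k').2.2.2]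
      rw [zero_pow hm0]
      have h1 : (-(-1:ℤ)^k') = (-1)^(k'+1) := by rw [pow_succ]; ring
      rw [h1]
      have hX : ((-1:ℤ)^(k'+1))^m = (-1)^(m*(k'+1)) := by rw [← pow_mul, mul_comm]
      rw [hX, pow_succ]
      ring
  · subst hk
    rw [indepSum_closed]
    rw [(pE_vals k).1.2.1, (pE_vals k).2.2.1]
    rw [pE_succ_true, pE_succ_true]
    rw [(pE_vals k).1.1, (pE_vals k).2.1]
    rw [zero_pow hm0]
    have hX : ((-1:ℤ)^k)^m = (-1)^(m*k) := by rw [← pow_mul, mul_comm]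
    rw [hX, pow_succ]
    ring
  · subst hk
    rw [indepSum_closed]
    rw [(pE_vals k).1.2.2, (pE_vals k).2.2.2]
    rw [show 3*k+2 = (3*k+1)+1 from by omega]
    rw [pE_succ_true, pE_succ_true]
    rw [(pE_vals k).1.2.1, (pE_vals k).2.2.1]
    rw [zero_pow hm0]
    have h1 : (-(-1:ℤ)^k) = (-1)^(k+1) := by rw [pow_succ]; ring
    rw [h1]
    have hX : ((-1:ℤ)^(k+1))^m = (-1)^(m*(k+1)) := by rw [← pow_mul, mul_comm]
    have hY : ((-1:ℤ)^k)^m = (-1)^(m*k) := by rw [← pow_mul, mul_comm]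
    rw [hX, hY]
    ring
end
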